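/- Let P_m denote the m-th Legendre polynomial. For every integer n ≥ 1 define I_n⁰ = (1/4)∫_{−1}^{1} (1+u) P_{n−1}(u) du, I_n¹ = −(1/2)∫_{−1}^{1} (1−u²) P'_{n−1}(u) du, and I_n² = (1/2)∫_{−1}^{1} (1−u)(1−u²) P''_{n−1}(u) du. Then: I_n⁰ equals 1/2 for n = 1, 1/6 for n = 2, and 0 for n ≥ 3; I_n¹ equals 0 for n = 1, −2/3 for n = 2, and 0 for n ≥ 3; I_n² equals 0 for n = 1, 2 and equals 2·(−1)^{n−1} for n ≥ 3. Consequently, for every n ≥ 1, I_n⁰ + (1/n)·I_n¹ + (1/(2n(n+1)))·I_n² = (−1)^{n−1}/(n(n+1)). -/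

import Mathlib

/-!
Integration by parts moves the derivatives from `P = P_m` onto the weights:
`∫ (1 - u²) P' = 2 ∫ u P` and `∫ (1 - u)(1 - u²) P'' = 4 P(-1) + ∫ (6u - 2) P`.
So the three integrals only involve `P(-1) = (-1)^m` and the moments `∫ P`, `∫ u P`, which vanish
for `m ≥ 2` because `P_m` is orthogonal to polynomials of degree `< m`: integrating by parts `m`
times against the Rodrigues form, all boundary terms vanish since `(u² - 1)^m` has roots of order
`m` at `±1`.
-/

noncomputable section

open Polynomial

/-- The `m`-th Legendre polynomial, defined by Rodrigues' formula
`P_m(u) = (1/(2^m m!))·(d/du)^m (u²-1)^m`. -/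
def legendreP (m : ℕ) : Polynomial ℝ :=
  ((1 : ℝ) / (2 ^ m * m.factorial)) • (fun q : Polynomial ℝ => derivative q)^[m] ((X ^ 2 - 1) ^ m)

open intervalIntegral Nat

namespace Polynomial

section CommRing

variable {R : Type*} [CommRing R]

theorem eval_iterate_derivative_eq_zero_of_pow_dvd {p : R[X]} {t : R} {m j : ℕ}
    (h : (X - C t) ^ m ∣ p) (hj : j < m) : (derivative^[j] p).eval t = 0 :=
  dvd_iff_isRoot.mp <|
    (dvd_pow_self _ (Nat.sub_ne_zero_of_lt hj)).trans (pow_sub_dvd_iterate_derivative_of_pow_dvd j h)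

theorem eval_iterate_derivative_X_sub_C_pow_mul (m : ℕ) (t : R) (g : R[X]) :
    (derivative^[m] ((X - C t) ^ m * g)).eval t = m ! * g.eval t := by
  rw [iterate_derivative_mul, eval_finsetSum,
    Finset.sum_eq_single_of_mem _ (Finset.mem_range.mpr m.succ_pos)]
  · simp [iterate_derivative_X_sub_pow_self]
  · intro k hk hk0
    rw [iterate_derivative_X_sub_pow, Nat.sub_sub_self (Finset.mem_range_succ_iff.mp hk)]
    simp [zero_pow hk0]

theorem X_sq_sub_one_pow_eq_mul (m : ℕ) :
    ((X : R[X]) ^ 2 - 1) ^ m = (X - C (-1)) ^ m * (X - C 1) ^ m := by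
  rw [← mul_pow, map_neg, map_one]
  ring

theorem eval_iterate_derivative_X_sq_sub_one_pow_eq_zero {m j : ℕ} (hj : j < m) {t : R}
    (ht : t = 1 ∨ t = -1) : (derivative^[j] (((X : R[X]) ^ 2 - 1) ^ m)).eval t = 0 := by
  refine eval_iterate_derivative_eq_zero_of_pow_dvd ?_ hj
  rw [X_sq_sub_one_pow_eq_mul]
  rcases ht with rfl | rfl
  · exact dvd_mul_left _ _
  · exact dvd_mul_right _ _

end CommRing

theorem integral_eval_mul_eval_derivative (p q : ℝ[X]) (a b : ℝ) :
    ∫ u in a..b, p.eval u * (derivative q).eval u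
      = p.eval b * q.eval b - p.eval a * q.eval a - ∫ u in a..b, (derivative p).eval u * q.eval u :=
  integral_mul_deriv_eq_deriv_mul (fun x _ => p.hasDerivAt x) (fun x _ => q.hasDerivAt x)
    ((derivative p).continuous.intervalIntegrable _ _)
    ((derivative q).continuous.intervalIntegrable _ _)

theorem integral_one_sub_sq_mul_eval_derivative (p : ℝ[X]) :
    ∫ u in (-1 : ℝ)..1, (1 - u ^ 2) * (derivative p).eval u
      = 2 * ∫ u in (-1 : ℝ)..1, u * p.eval u := by
  have := integral_eval_mul_eval_derivative (1 - X ^ 2) p (-1) 1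
  simp only [eval_sub, eval_one, eval_pow, eval_X, derivative_sub, derivative_one,
    derivative_X_pow] at this
  norm_num [this, ← integral_const_mul, ← integral_neg, mul_assoc]

theorem integral_one_sub_mul_one_sub_sq_mul_eval_derivative_derivative (p : ℝ[X]) :
    ∫ u in (-1 : ℝ)..1, (1 - u) * (1 - u ^ 2) * (derivative (derivative p)).eval u
      = 4 * p.eval (-1) + 6 * (∫ u in (-1 : ℝ)..1, u * p.eval u)
        - 2 * ∫ u in (-1 : ℝ)..1, p.eval u := by
  let r : ℝ[X] := (1 - X) * (1 - X ^ 2)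
  have hr : ∀ u, r.eval u = (1 - u) * (1 - u ^ 2) := fun u => by simp [r]
  have hr' : ∀ u, (derivative r).eval u = (1 - u) * (-1 - 3 * u) := fun u => by simp [r]; ring
  have hr'' : ∀ u, (derivative (derivative r)).eval u = 6 * u - 2 := fun u => by simp [r]; ring
  have h1 := integral_eval_mul_eval_derivative r (derivative p) (-1) 1
  have h2 := integral_eval_mul_eval_derivative (derivative r) p (-1) 1
  have h3 : ∫ u in (-1 : ℝ)..1, (6 * u - 2) * p.eval u
      = 6 * (∫ u in (-1 : ℝ)..1, u * p.eval u) - 2 * ∫ u in (-1 : ℝ)..1, p.eval u := by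
    rw [← integral_const_mul, ← integral_const_mul, ← integral_sub]
    · simp only [sub_mul, mul_assoc]
    all_goals exact (by fun_prop : Continuous _).intervalIntegrable _ _
  simp only [hr, hr', hr''] at h1 h2
  rw [h1, h2, h3]
  ring

theorem integral_one_add_mul_eval (p : ℝ[X]) (a b : ℝ) :
    ∫ u in a..b, (1 + u) * p.eval u = (∫ u in a..b, p.eval u) + ∫ u in a..b, u * p.eval u := by
  rw [← integral_add]
  · simp only [add_mul, one_mul]
  all_goals exact (by fun_prop : Continuous _).intervalIntegrable _ _

theorem integral_eval_mul_eval_iterate_derivative_X_sq_sub_one_pow_eq_zero {m j : ℕ} (hj : j ≤ m)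
    (p : ℝ[X]) (hp : p.degree < j) :
    ∫ u in (-1 : ℝ)..1, p.eval u * (derivative^[j] (((X : ℝ[X]) ^ 2 - 1) ^ m)).eval u = 0 := by
  induction j generalizing p with
  | zero => simp [degree_eq_bot.mp (Nat.WithBot.lt_zero_iff.mp hp)]
  | succ j ih =>
    have hp' : (derivative p).degree < j := by
      rcases eq_or_ne p 0 with rfl | hp0
      · simp
      · exact (degree_derivative_lt hp0).trans_le (Order.le_of_lt_succ hp)
    rw [Function.iterate_succ_apply', integral_eval_mul_eval_derivative,
      eval_iterate_derivative_X_sq_sub_one_pow_eq_zero hj (Or.inl rfl),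
      eval_iterate_derivative_X_sq_sub_one_pow_eq_zero hj (Or.inr rfl), ih (by omega) _ hp']
    ring

end Polynomial

theorem legendreP_eq (m : ℕ) :
    legendreP m = C (1 / (2 ^ m * m ! : ℝ)) * derivative^[m] (((X : ℝ[X]) ^ 2 - 1) ^ m) := by
  rw [legendreP, smul_eq_C_mul]

theorem legendreP_zero : legendreP 0 = 1 := by
  simp [legendreP]

theorem legendreP_one : legendreP 1 = X := by
  simp only [legendreP_eq, pow_one, factorial_one, Function.iterate_one, derivative_sub,
    derivative_X_pow, derivative_one]
  rw [sub_zero, ← mul_assoc, ← C_mul]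
  norm_num

theorem integral_eval_mul_eval_legendreP_eq_zero {m : ℕ} (p : ℝ[X]) (hp : p.degree < m) :
    ∫ u in (-1 : ℝ)..1, p.eval u * (legendreP m).eval u = 0 := by
  simp only [legendreP_eq, eval_mul, eval_C, mul_left_comm _ (1 / _ : ℝ), integral_const_mul,
    integral_eval_mul_eval_iterate_derivative_X_sq_sub_one_pow_eq_zero le_rfl p hp, mul_zero]

theorem legendreP_eval_neg_one (m : ℕ) : (legendreP m).eval (-1) = (-1) ^ m := by
  rw [legendreP_eq, eval_mul, X_sq_sub_one_pow_eq_mul, eval_iterate_derivative_X_sub_C_pow_mul]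
  simp only [eval_C, eval_pow, eval_sub, eval_X]
  rw [show (-1 - 1 : ℝ) = 2 * -1 by norm_num, mul_pow]
  field_simp

theorem integral_eval_legendreP (m : ℕ) :
    ∫ u in (-1 : ℝ)..1, (legendreP m).eval u = if m = 0 then 2 else 0 := by
  rcases m with _ | m
  · norm_num [legendreP_zero]
  · simpa using integral_eval_mul_eval_legendreP_eq_zero (m := m + 1) 1
      (by rw [degree_one]; exact_mod_cast m.succ_pos)

theorem integral_mul_eval_legendreP (m : ℕ) :
    ∫ u in (-1 : ℝ)..1, u * (legendreP m).eval u = if m = 1 then 2 / 3 else 0 := by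
  rcases m with _ | _ | m
  · norm_num [legendreP_zero]
  · norm_num [legendreP_one, ← sq]
  · simpa using integral_eval_mul_eval_legendreP_eq_zero (m := m + 2) X
      (by rw [degree_X]; exact_mod_cast (by omega : 1 < m + 2))

/-- Values of the three basic Legendre integrals
`I_n⁰ = (1/4)∫_{-1}^1 (1+u)P_{n-1}(u) du`,
`I_n¹ = -(1/2)∫_{-1}^1 (1-u²)P'_{n-1}(u) du`,
`I_n² = (1/2)∫_{-1}^1 (1-u)(1-u²)P''_{n-1}(u) du`, and the resulting eigenvalue formula
`I_n⁰ + (1/n)I_n¹ + (1/(2n(n+1)))I_n² = (-1)^(n-1)/(n(n+1))` for every `n ≥ 1`. -/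
theorem legendre_integrals (n : ℕ) (hn : 1 ≤ n) :
    ((1 / 4 : ℝ) * ∫ u in (-1 : ℝ)..1, (1 + u) * (legendreP (n - 1)).eval u)
        = (if n = 1 then (1 / 2 : ℝ) else if n = 2 then 1 / 6 else 0) ∧
    (-(1 / 2 : ℝ) * ∫ u in (-1 : ℝ)..1,
        (1 - u ^ 2) * (derivative (legendreP (n - 1))).eval u)
        = (if n = 1 then (0 : ℝ) else if n = 2 then -(2 / 3) else 0) ∧
    ((1 / 2 : ℝ) * ∫ u in (-1 : ℝ)..1,
        (1 - u) * (1 - u ^ 2) * (derivative (derivative (legendreP (n - 1)))).eval u)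
        = (if n = 1 ∨ n = 2 then (0 : ℝ) else 2 * (-1 : ℝ) ^ (n - 1)) ∧
    ((1 / 4 : ℝ) * ∫ u in (-1 : ℝ)..1, (1 + u) * (legendreP (n - 1)).eval u)
      + (1 / (n : ℝ)) * (-(1 / 2 : ℝ) * ∫ u in (-1 : ℝ)..1,
          (1 - u ^ 2) * (derivative (legendreP (n - 1))).eval u)
      + (1 / (2 * (n : ℝ) * ((n : ℝ) + 1))) * ((1 / 2 : ℝ) * ∫ u in (-1 : ℝ)..1,
          (1 - u) * (1 - u ^ 2) * (derivative (derivative (legendreP (n - 1)))).eval u)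
      = (-1 : ℝ) ^ (n - 1) / ((n : ℝ) * ((n : ℝ) + 1)) := by
  obtain ⟨m, rfl⟩ : ∃ m, n = m + 1 := ⟨n - 1, by omega⟩
  simp only [Nat.add_sub_cancel, integral_one_add_mul_eval, integral_one_sub_sq_mul_eval_derivative,
    integral_one_sub_mul_one_sub_sq_mul_eval_derivative_derivative, integral_eval_legendreP,
    integral_mul_eval_legendreP, legendreP_eval_neg_one]
  rcases m with _ | _ | m
  · norm_num
  · norm_num
  · simp only [one_div, Nat.add_eq_zero_iff, one_ne_zero, and_false, and_self, ↓reduceIte,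
      Nat.add_eq_right, add_zero, mul_zero, reduceEqDiff, sub_zero, or_self, cast_add, cast_one,
      mul_inv_rev, zero_add, true_and]
    exact ⟨by ring, by field_simp; ring⟩
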